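/- arXiv:2111.08843 — 2 statements merged into one kernel-verified Lean document; each statement's English description precedes it below -/
import Mathlib

section
/- Let i ∈ [0, N−1] and J ⊆ [i+1, N−1], and set c = g_i ⊕ ⊕_{j∈J} g_j (sum over F_2). Then for every subset S ⊆ S_i there exists at least one subset T ⊆ T_i such that the coordinate c_{S∪T} equals 1. -/
noncomputable section
open scoped Classical
open Finset

/-- The 2×2 binary matrix [[1,0],[1,1]], as an ℕ-indexed function (zero outside range). -/
def G2 (a b : ℕ) : ZMod 2 :=
  if a = 0 ∧ b = 0 then 1
  else if a = 1 ∧ b = 0 then 1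
  else if a = 1 ∧ b = 1 then 1
  else 0

/-- `G n i c` is the (i,c) entry of the n-th Kronecker power over F₂ of [[1,0],[1,1]],
for row/column indices i, c ∈ [0, 2^n − 1] (standard row-major index flattening). -/
def G : ℕ → ℕ → ℕ → ZMod 2
  | 0 => fun i c => if i = 0 ∧ c = 0 then 1 else 0
  | n + 1 => fun i c => G2 (i / 2 ^ n) (c / 2 ^ n) * G n (i % 2 ^ n) (c % 2 ^ n)

/-- Row i of the polar transform G_N (N = 2^n), as a vector of its coordinates. -/
def g (n i : ℕ) : ℕ → ZMod 2 := fun c => G n i c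

/-- S_i ⊆ [0, n−1]: the support of the binary representation of i. -/
def S (n i : ℕ) : Finset ℕ := (Finset.range n).filter fun a => i.testBit a

/-- T_i = [0, n−1] \ S_i. -/
def T (n i : ℕ) : Finset ℕ := Finset.range n \ S n i

/-- Hamming weight of a vector whose coordinates are indexed by [0, 2^n − 1]. -/
def wt (n : ℕ) (v : ℕ → ZMod 2) : ℕ :=
  ((Finset.range (2 ^ n)).filter fun c => v c ≠ 0).card

/-- The index in [0, 2^n − 1] whose binary support is the set U ⊆ [0, n−1]. -/
def idx (U : Finset ℕ) : ℕ := ∑ a ∈ U, 2 ^ a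

/-- K_i = {j ∈ [i+1, N−1] : w(g_j) ≥ w(g_i ⊕ g_j) and w(g_i ⊕ g_j) = w(g_i)}. -/
def K (n i : ℕ) : Finset ℕ :=
  (Finset.Ico (i + 1) (2 ^ n)).filter fun j =>
    wt n (g n i + g n j) ≤ wt n (g n j) ∧ wt n (g n i + g n j) = wt n (g n i)

/-- One generating step of the partial order on [0, 2^n − 1]. -/
def poStep (n i j : ℕ) : Prop :=
  i < 2 ^ n ∧ j < 2 ^ n ∧
    (S n i ⊆ S n j ∨
      ∃ a b, a ∈ S n i ∧ b ∉ S n i ∧ a < b ∧ S n j = insert b (S n i \ {a}))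

/-- The partial order ⪯: reflexive–transitive closure of the generating relation. -/
def po (n : ℕ) : ℕ → ℕ → Prop := Relation.ReflTransGen (poStep n)

/-- Partial Order Property of an information set I ⊆ [0, 2^n − 1]. -/
def POP (n : ℕ) (I : Finset ℕ) : Prop :=
  ∀ i ∈ I, ∀ j, j < 2 ^ n → po n i j → j ∈ I

/-- The code C(I): all F₂-linear combinations (i.e. subset sums) of the rows g_i, i ∈ I. -/
def codewords (n : ℕ) (I : Finset ℕ) : Finset (ℕ → ZMod 2) :=
  I.powerset.image fun H => ∑ h ∈ H, g n h

/-- A_w(I): the number of codewords of C(I) of Hamming weight w. -/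
def A (n : ℕ) (I : Finset ℕ) (w : ℕ) : ℕ :=
  ((codewords n I).filter fun v => wt n v = w).card

/-- The coset C_i(I) = {g_i ⊕ ⊕_{h∈H} g_h : H ⊆ I \ [0,i]}. -/
def coset (n : ℕ) (I : Finset ℕ) (i : ℕ) : Finset (ℕ → ZMod 2) :=
  ((I.filter fun h => i < h).powerset).image fun H => g n i + ∑ h ∈ H, g n h

/-- A_{i,w}(I): the number of vectors of Hamming weight w in the coset C_i(I). -/
def Ai (n : ℕ) (I : Finset ℕ) (i w : ℕ) : ℕ :=
  ((coset n I i).filter fun v => wt n v = w).card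

/-!
Identify the coordinate index `idx U` with its bit support `U`; then the entry of `g_j` at `U` is
`[U ⊆ S_j]`. Summing the coordinates of `g_j` over the coset `{S ∪ T : T ⊆ T_i}` counts
`2 ^ |T_i ∩ S_j|` ones when `S ⊆ S_j`, which is odd exactly when `S_j ⊆ S_i`. That happens for
`j = i`, but never for `j > i`, since `S_j ⊆ S_i` forces `j ≤ i`. Hence the coordinates of `c` over
the coset sum to `1` in `F₂`, so one of them is `1`.
-/

theorem testBit_idx (U : Finset ℕ) (b : ℕ) : (idx U).testBit b ↔ b ∈ U := by
  rw [← Nat.mem_bitIndices, ← List.mem_toFinset, idx, Finset.toFinset_bitIndices_sum_two_pow]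

theorem idx_lt {n : ℕ} {U : Finset ℕ} (hU : U ⊆ range n) : idx U < 2 ^ n :=
  Nat.geomSum_lt le_rfl fun _ hk => mem_range.1 (hU hk)

theorem mem_S_iff {n i : ℕ} (hi : i < 2 ^ n) {b : ℕ} : b ∈ S n i ↔ i.testBit b := by
  rw [S, mem_filter, mem_range, and_iff_right_iff_imp]
  intro hb
  exact (Nat.pow_lt_pow_iff_right (by norm_num)).1 ((Nat.ge_two_pow_of_testBit hb).trans_lt hi)

theorem S_eq_toFinset_bitIndices {n i : ℕ} (hi : i < 2 ^ n) : S n i = i.bitIndices.toFinset := by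
  ext b
  rw [mem_S_iff hi, List.mem_toFinset, Nat.mem_bitIndices]

theorem idx_S {n i : ℕ} (hi : i < 2 ^ n) : idx (S n i) = i := by
  rw [S_eq_toFinset_bitIndices hi, idx, Finset.sum_toFinset_bitIndices_two_pow]

theorem le_of_S_subset_S {n i j : ℕ} (hi : i < 2 ^ n) (hj : j < 2 ^ n) (h : S n j ⊆ S n i) :
    j ≤ i := by
  rw [← idx_S hi, ← idx_S hj]
  exact sum_le_sum_of_subset h

theorem bits_subset_iff_div_and_mod (c i m : ℕ) :
    (∀ b, c.testBit b → i.testBit b) ↔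
      (∀ b, (c / 2 ^ m).testBit b → (i / 2 ^ m).testBit b) ∧
        (∀ b, (c % 2 ^ m).testBit b → (i % 2 ^ m).testBit b) := by
  simp only [Nat.testBit_mod_two_pow, Nat.testBit_div_two_pow, Bool.and_eq_true, decide_eq_true_eq]
  constructor
  · intro h
    exact ⟨fun b => h (b + m), fun b hb => ⟨hb.1, h b hb.2⟩⟩
  · intro ⟨hhi, hlo⟩ b hb
    rcases lt_or_ge b m with hbm | hbm
    · exact (hlo b ⟨hbm, hb⟩).2
    · obtain ⟨k, rfl⟩ := Nat.exists_eq_add_of_le' hbm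
      exact hhi k hb

theorem G2_eq_ite {a c : ℕ} (ha : a < 2) (hc : c < 2) :
    G2 a c = if ∀ b, c.testBit b → a.testBit b then 1 else 0 := by
  interval_cases a <;> interval_cases c <;> simp [G2]
  exact ⟨0, rfl⟩

theorem G_eq_ite : ∀ {n i c : ℕ}, i < 2 ^ n → c < 2 ^ n →
    G n i c = if ∀ b, c.testBit b → i.testBit b then 1 else 0
  | 0, i, c, hi, hc => by
    obtain rfl : i = 0 := by simpa using hi
    obtain rfl : c = 0 := by simpa using hc
    simp [G]
  | n + 1, i, c, hi, hc => by
    have hdiv {x : ℕ} (hx : x < 2 ^ (n + 1)) : x / 2 ^ n < 2 :=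
      Nat.div_lt_of_lt_mul (by rwa [← pow_succ])
    have hmod (x : ℕ) : x % 2 ^ n < 2 ^ n := Nat.mod_lt _ (Nat.two_pow_pos n)
    dsimp only [G]
    rw [G2_eq_ite (hdiv hi) (hdiv hc), G_eq_ite (hmod i) (hmod c), ite_zero_mul_ite_zero,
      mul_one]
    exact if_congr (bits_subset_iff_div_and_mod c i n).symm rfl rfl

theorem g_idx {n j : ℕ} (hj : j < 2 ^ n) {U : Finset ℕ} (hU : U ⊆ range n) :
    g n j (idx U) = if U ⊆ S n j then 1 else 0 := by
  simp only [g, G_eq_ite hj (idx_lt hU), testBit_idx, ← mem_S_iff hj]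
  rfl

theorem sum_powerset_ite_union_subset {α : Type*} [DecidableEq α] (A W B : Finset α) :
    ∑ T ∈ W.powerset, (if A ∪ T ⊆ B then 1 else 0 : ZMod 2) =
      if A ⊆ B ∧ Disjoint W B then 1 else 0 := by
  by_cases hA : A ⊆ B
  · have hfilter : W.powerset.filter (fun T => A ∪ T ⊆ B) = (W ∩ B).powerset := by
      ext T
      simp only [mem_filter, mem_powerset, union_subset_iff, hA, true_and, subset_inter_iff]
    rw [sum_boole, hfilter, card_powerset, Nat.cast_pow, Nat.cast_ofNat,
      show (2 : ZMod 2) = 0 from rfl, zero_pow_eq]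
    simp [hA, disjoint_iff_inter_eq_empty]
  · simp [union_subset_iff, hA]

theorem sum_g_idx_union_powerset_T {n i j : ℕ} (hj : j < 2 ^ n) {Sa : Finset ℕ} (hSa : Sa ⊆ range n) :
    ∑ Ta ∈ (T n i).powerset, g n j (idx (Sa ∪ Ta)) =
      if Sa ⊆ S n j ∧ S n j ⊆ S n i then 1 else 0 := by
  have hT : T n i ⊆ range n := sdiff_subset
  rw [sum_congr rfl fun Ta hTa => g_idx hj (union_subset hSa ((mem_powerset.1 hTa).trans hT)),
    sum_powerset_ite_union_subset]
  congr 2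
  rw [T, disjoint_comm, disjoint_sdiff_iff_le (filter_subset _ _) (filter_subset _ _)]

theorem exists_one_coordinate_general (n : ℕ) (i : ℕ) (hi : i < 2 ^ n)
    (J : Finset ℕ) (hJ : J ⊆ Finset.Ico (i + 1) (2 ^ n)) :
    ∀ Sa ⊆ S n i, ∃ Ta ⊆ T n i,
      (g n i + ∑ j ∈ J, g n j) (idx (Sa ∪ Ta)) = 1 := by
  intro Sa hSa
  have hSr : Sa ⊆ range n := hSa.trans (filter_subset _ _)
  have hrows : ∀ j ∈ J, ∑ Ta ∈ (T n i).powerset, g n j (idx (Sa ∪ Ta)) = 0 := by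
    intro j hj
    obtain ⟨hij, hjn⟩ := mem_Ico.1 (hJ hj)
    rw [sum_g_idx_union_powerset_T hjn hSr, if_neg]
    exact fun h => (le_of_S_subset_S hi hjn h.2).not_gt hij
  have hsum : ∑ Ta ∈ (T n i).powerset, (g n i + ∑ j ∈ J, g n j) (idx (Sa ∪ Ta)) = 1 := by
    simp only [Pi.add_apply, Finset.sum_apply, sum_add_distrib]
    rw [sum_comm, sum_eq_zero hrows, sum_g_idx_union_powerset_T hi hSr, if_pos ⟨hSa, subset_rfl⟩,
      add_zero]
  obtain ⟨Ta, hTa, hne⟩ := exists_ne_zero_of_sum_ne_zero (hsum ▸ one_ne_zero)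
  exact ⟨Ta, mem_powerset.1 hTa, (by decide : ∀ x : ZMod 2, x ≠ 0 → x = 1) _ hne⟩

/-- for c = g_i ⊕ ⊕_{j∈J} g_j with J ⊆ [i+1, N−1], for every S ⊆ S_i there is
some T ⊆ T_i with c_{S∪T} = 1. -/
theorem exists_one_coordinate (n : ℕ) (hn : 1 ≤ n) (i : ℕ) (hi : i < 2 ^ n)
    (J : Finset ℕ) (hJ : J ⊆ Finset.Ico (i + 1) (2 ^ n)) :
    ∀ Sa ⊆ S n i, ∃ Ta ⊆ T n i,
      (g n i + ∑ j ∈ J, g n j) (idx (Sa ∪ Ta)) = 1 :=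
  exists_one_coordinate_general n i hi J hJ
end
end

section
/- For every i ∈ [0, N−1] and every subset H ⊆ [i+1, N−1], the Hamming weight of the codeword g_i ⊕ ⊕_{h∈H} g_h (sum over F_2) is at least w(g_i) = 2^{|S_i|}. -/
noncomputable section
open scoped Classical
open Finset

/-!
Rows of the polar transform satisfy the Plotkin recursion: for `i < 2^n` the row `g_i` of
`G_{2^(n+1)}` is `(g_i | 0)`, and the row `g_{2^n + j}` is `(g_j | g_j)`. If `i` is a low row, the
coset word splits as `(u + w | w)` with `u` a coset word of `g_i` at level `n`, so its weight is
`w(u + w) + w(w) ≥ w(u)`. If `i = 2^n + j` is a high row, all of `H` is high too and the word is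
`(u | u)` with `u` a coset word of `g_j`; its weight doubles, as does `2^|S_i|`.
-/

def vecConcat {M : Type*} (n : ℕ) (u v : ℕ → M) : ℕ → M :=
  fun c => if c < 2 ^ n then u c else v (c - 2 ^ n)

section vecConcat

variable {M : Type*} [AddCommMonoid M] (n : ℕ)

lemma vecConcat_add (u v u' v' : ℕ → M) :
    vecConcat n u v + vecConcat n u' v' = vecConcat n (u + u') (v + v') := by
  funext c
  by_cases hc : c < 2 ^ n <;> simp [vecConcat, hc]

lemma vecConcat_sum {ι : Type*} (s : Finset ι) (u v : ι → ℕ → M) :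
    ∑ x ∈ s, vecConcat n (u x) (v x) = vecConcat n (∑ x ∈ s, u x) (∑ x ∈ s, v x) := by
  funext c
  by_cases hc : c < 2 ^ n <;> simp [vecConcat, hc, Finset.sum_apply]

end vecConcat

lemma wt_add_le (n : ℕ) (u v : ℕ → ZMod 2) : wt n (u + v) ≤ wt n u + wt n v := by
  unfold wt
  refine (Finset.card_le_card fun c hc => ?_).trans (Finset.card_union_le _ _)
  simp only [Finset.mem_filter, Finset.mem_union, Pi.add_apply] at hc ⊢
  by_contra! h
  exact hc.2 (by rw [h.1 hc.1, h.2 hc.1, add_zero])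

lemma wt_le_wt_add_add_wt (n : ℕ) (u v : ℕ → ZMod 2) : wt n u ≤ wt n (u + v) + wt n v := by
  simpa [add_assoc, ZModModule.add_self] using wt_add_le n (u + v) v

@[simp]
lemma wt_zero (n : ℕ) : wt n 0 = 0 := by
  simp [wt]

lemma wt_vecConcat (n : ℕ) (u v : ℕ → ZMod 2) :
    wt (n + 1) (vecConcat n u v) = wt n u + wt n v := by
  simp only [wt, Finset.card_filter, pow_succ, mul_two, Finset.sum_range_add]
  congr 1 <;> refine Finset.sum_congr rfl fun c hc => ?_ <;>
    simp [vecConcat, Finset.mem_range.mp hc]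

lemma G2_zero_left {b : ℕ} (hb : b ≠ 0) : G2 0 b = 0 := by
  simp [G2, hb]

lemma G2_of_two_le (a : ℕ) {b : ℕ} (hb : 2 ≤ b) : G2 a b = 0 := by
  simp [G2, show b ≠ 0 by omega, show b ≠ 1 by omega]

lemma g_of_two_pow_le {n c : ℕ} (i : ℕ) (hc : 2 ^ n ≤ c) : g n i c = 0 := by
  cases n with
  | zero => simp [g, G]; omega
  | succ n =>
    have : 2 ≤ c / 2 ^ n := (Nat.le_div_iff_mul_le (by positivity)).2 (by rwa [← pow_succ'])
    simp [g, G, G2_of_two_le _ this]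

lemma g_succ_of_lt {n i : ℕ} (hi : i < 2 ^ n) : g (n + 1) i = vecConcat n (g n i) 0 := by
  funext c
  by_cases hc : c < 2 ^ n
  · simp [g, G, vecConcat, hc, hi, Nat.div_eq_of_lt, Nat.mod_eq_of_lt, G2]
  · have : c / 2 ^ n ≠ 0 := by simp [Nat.div_eq_zero_iff]; omega
    simp [g, G, vecConcat, hc, Nat.div_eq_of_lt hi, G2_zero_left this]

lemma g_succ_two_pow_add {n j : ℕ} (hj : j < 2 ^ n) :
    g (n + 1) (2 ^ n + j) = vecConcat n (g n j) (g n j) := by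
  have hdiv : (2 ^ n + j) / 2 ^ n = 1 := by simp [Nat.add_div_left, Nat.div_eq_of_lt hj]
  have hmod : (2 ^ n + j) % 2 ^ n = j := by simp [Nat.mod_eq_of_lt hj]
  funext c
  by_cases hc : c < 2 ^ n
  · simp [g, G, vecConcat, hc, hdiv, hmod, Nat.div_eq_of_lt, Nat.mod_eq_of_lt, G2]
  obtain ⟨d, rfl⟩ := Nat.exists_eq_add_of_le (not_lt.1 hc)
  by_cases hd : d < 2 ^ n
  · simp [g, G, vecConcat, hdiv, hmod, Nat.add_div_left, Nat.div_eq_of_lt hd,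
      Nat.mod_eq_of_lt hd, G2]
  · have hG : G n j d = 0 := g_of_two_pow_le j (not_lt.1 hd)
    have h2 : 2 ≤ d / 2 ^ n + 1 := by
      have := Nat.div_pos (not_lt.1 hd) (by positivity : 0 < 2 ^ n); omega
    simp [g, G, vecConcat, hdiv, Nat.add_div_left, G2_of_two_le _ h2, hG]

lemma sum_g_succ_of_lt {n : ℕ} {s : Finset ℕ} (hs : ∀ h ∈ s, h < 2 ^ n) :
    ∑ h ∈ s, g (n + 1) h = vecConcat n (∑ h ∈ s, g n h) 0 := by
  rw [Finset.sum_congr rfl fun h hh => g_succ_of_lt (hs h hh), vecConcat_sum, Finset.sum_const_zero]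

lemma sum_g_succ_of_two_pow_le {n : ℕ} {s : Finset ℕ}
    (hs : ∀ h ∈ s, 2 ^ n ≤ h ∧ h < 2 ^ (n + 1)) :
    ∑ h ∈ s, g (n + 1) h =
      vecConcat n (∑ h ∈ s, g n (h - 2 ^ n)) (∑ h ∈ s, g n (h - 2 ^ n)) := by
  rw [← vecConcat_sum]
  refine Finset.sum_congr rfl fun h hh => ?_
  obtain ⟨h1, h2⟩ := hs h hh
  rw [← g_succ_two_pow_add (by rw [pow_succ] at h2; omega), Nat.add_sub_cancel' h1]

lemma S_succ (n i : ℕ) : S (n + 1) i = if i.testBit n then insert n (S n i) else S n i := by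
  rw [S, Finset.range_add_one, Finset.filter_insert, ← S]

lemma S_succ_of_lt {n i : ℕ} (hi : i < 2 ^ n) : S (n + 1) i = S n i := by
  simp [S_succ, Nat.testBit_lt_two_pow hi]

lemma card_S_two_pow_add {n j : ℕ} (hj : j < 2 ^ n) :
    (S (n + 1) (2 ^ n + j)).card = (S n j).card + 1 := by
  have hlow : S n (2 ^ n + j) = S n j :=
    Finset.filter_congr fun a ha => by rw [Nat.testBit_two_pow_add_gt (Finset.mem_range.1 ha)]
  rw [S_succ, Nat.testBit_two_pow_add_eq, Nat.testBit_lt_two_pow hj, hlow, Bool.not_false,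
    if_pos rfl, Finset.card_insert_of_notMem (by simp [S])]

lemma wt_g {n i : ℕ} (hi : i < 2 ^ n) : wt n (g n i) = 2 ^ (S n i).card := by
  induction n generalizing i with
  | zero =>
    obtain rfl : i = 0 := by simpa using hi
    simp [wt, S, g, G]
  | succ n ih =>
    rcases lt_or_ge i (2 ^ n) with hlow | hhigh
    · rw [g_succ_of_lt hlow, wt_vecConcat, wt_zero, S_succ_of_lt hlow, ih hlow, add_zero]
    · obtain ⟨j, rfl⟩ := Nat.exists_eq_add_of_le hhigh
      have hj : j < 2 ^ n := by rw [pow_succ] at hi; omega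
      rw [g_succ_two_pow_add hj, wt_vecConcat, ih hj, card_S_two_pow_add hj, pow_succ, mul_two]

lemma coset_word_succ_of_lt {n i : ℕ} (hi : i < 2 ^ n) {H : Finset ℕ}
    (hH : ∀ h ∈ H, h < 2 ^ (n + 1)) :
    g (n + 1) i + ∑ h ∈ H, g (n + 1) h =
      vecConcat n
        (g n i + ∑ h ∈ H with h < 2 ^ n, g n h + ∑ h ∈ H with ¬h < 2 ^ n, g n (h - 2 ^ n))
        (∑ h ∈ H with ¬h < 2 ^ n, g n (h - 2 ^ n)) := by
  rw [← Finset.sum_filter_add_sum_filter_not H (· < 2 ^ n),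
    sum_g_succ_of_lt fun h hh => (Finset.mem_filter.1 hh).2,
    sum_g_succ_of_two_pow_le fun h hh =>
      ⟨not_lt.1 (Finset.mem_filter.1 hh).2, hH h (Finset.mem_filter.1 hh).1⟩,
    g_succ_of_lt hi, vecConcat_add, vecConcat_add, zero_add, zero_add, add_assoc]

lemma coset_word_succ_two_pow_add {n j : ℕ} (hj : j < 2 ^ n) {H : Finset ℕ}
    (hH : ∀ h ∈ H, 2 ^ n ≤ h ∧ h < 2 ^ (n + 1)) :
    g (n + 1) (2 ^ n + j) + ∑ h ∈ H, g (n + 1) h =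
      vecConcat n (g n j + ∑ h ∈ H.image (· - 2 ^ n), g n h)
        (g n j + ∑ h ∈ H.image (· - 2 ^ n), g n h) := by
  have hreindex : ∑ h ∈ H.image (· - 2 ^ n), g n h = ∑ h ∈ H, g n (h - 2 ^ n) :=
    Finset.sum_image fun x hx y hy hxy => by
      have := (hH x hx).1; have := (hH y hy).1; omega
  rw [g_succ_two_pow_add hj, sum_g_succ_of_two_pow_le hH, vecConcat_add, hreindex]

lemma two_pow_card_S_le_wt_coset_word {n i : ℕ} (hi : i < 2 ^ n) {H : Finset ℕ}
    (hH : H ⊆ Finset.Ico (i + 1) (2 ^ n)) :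
    2 ^ (S n i).card ≤ wt n (g n i + ∑ h ∈ H, g n h) := by
  induction n generalizing i H with
  | zero =>
    obtain rfl : i = 0 := by simpa using hi
    obtain rfl : H = ∅ := Finset.subset_empty.1 (by simpa using hH)
    simpa using (wt_g hi).ge
  | succ n ih =>
    have hH' : ∀ h ∈ H, i < h ∧ h < 2 ^ (n + 1) := fun h hh => by
      have := Finset.mem_Ico.1 (hH hh); omega
    rcases lt_or_ge i (2 ^ n) with hlow | hhigh
    · have hih := ih hlow (H := H.filter (· < 2 ^ n)) fun h hh => by
        obtain ⟨hh, hlt⟩ := Finset.mem_filter.1 hh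
        have := (hH' h hh).1; exact Finset.mem_Ico.2 ⟨by omega, hlt⟩
      rw [coset_word_succ_of_lt hlow fun h hh => (hH' h hh).2, wt_vecConcat, S_succ_of_lt hlow]
      exact hih.trans (wt_le_wt_add_add_wt n _ _)
    · obtain ⟨j, rfl⟩ := Nat.exists_eq_add_of_le hhigh
      have hj : j < 2 ^ n := by rw [pow_succ] at hi; omega
      have hih := ih hj (H := H.image (· - 2 ^ n)) fun h hh => by
        obtain ⟨x, hx, rfl⟩ := Finset.mem_image.1 hh
        obtain ⟨hx1, hx2⟩ := hH' x hx
        rw [Finset.mem_Ico]; rw [pow_succ] at hx2; omega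
      have hHhigh : ∀ h ∈ H, 2 ^ n ≤ h ∧ h < 2 ^ (n + 1) := fun h hh => by
        have := hH' h hh; omega
      rw [coset_word_succ_two_pow_add hj hHhigh,
        wt_vecConcat, card_S_two_pow_add hj, pow_succ, mul_two]
      exact add_le_add hih hih

theorem coset_weight_lower_bound_general (n : ℕ) (i : ℕ) (hi : i < 2 ^ n)
    (H : Finset ℕ) (hH : H ⊆ Finset.Ico (i + 1) (2 ^ n)) :
    2 ^ (S n i).card ≤ wt n (g n i + ∑ h ∈ H, g n h) ∧
      wt n (g n i) = 2 ^ (S n i).card :=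
  ⟨two_pow_card_S_le_wt_coset_word hi hH, wt_g hi⟩

/-- w(g_i ⊕ ⊕_{h∈H} g_h) ≥ w(g_i) = 2^{|S_i|} for any H ⊆ [i+1, N−1]. -/
theorem coset_weight_lower_bound (n : ℕ) (hn : 1 ≤ n) (i : ℕ) (hi : i < 2 ^ n)
    (H : Finset ℕ) (hH : H ⊆ Finset.Ico (i + 1) (2 ^ n)) :
    2 ^ (S n i).card ≤ wt n (g n i + ∑ h ∈ H, g n h) ∧
      wt n (g n i) = 2 ^ (S n i).card :=
  coset_weight_lower_bound_general n i hi H hH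
end
end
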